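/- arXiv:1012.1777 — 4 statements merged into one kernel-verified Lean document; each statement's English description precedes it below -/
import Mathlib

section
/- Let D = ⟨x, y | x^(2^r) = y^(2^r) = [x,y]² = [x,[x,y]] = [y,[x,y]] = 1⟩ with r ≥ 2, z := [x,y], and let α be an automorphism of D of order 3. Then z is the only nontrivial element of the center Z(D) fixed by α. -/
open scoped commutatorElement

/-- The generator `x` of the free group on two letters. -/
def gx : FreeGroup (Fin 2) := FreeGroup.of 0

/-- The generator `y` of the free group on two letters. -/
def gy : FreeGroup (Fin 2) := FreeGroup.of 1

/-- The relations of the Rédei presentation with parameters `r`, `s`: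
`x^(2^r)`, `y^(2^s)`, `⁅x,y⁆^2`, `⁅x,⁅x,y⁆⁆`, `⁅y,⁅x,y⁆⁆`,
where `⁅a,b⁆ = a*b*a⁻¹*b⁻¹`. -/
def redeiRels (r s : ℕ) : Set (FreeGroup (Fin 2)) :=
  {gx ^ (2 ^ r), gy ^ (2 ^ s), ⁅gx, gy⁆ ^ 2, ⁅gx, ⁅gx, gy⁆⁆, ⁅gy, ⁅gx, gy⁆⁆}

/-- The Rédei group `⟨x,y ∣ x^(2^r) = y^(2^s) = [x,y]^2 = [x,[x,y]] = [y,[x,y]] = 1⟩`. -/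
abbrev RedeiGroup (r s : ℕ) := PresentedGroup (redeiRels r s)

/-- The image of the generator `x` in the Rédei group. -/
def Dx (r s : ℕ) : RedeiGroup r s := PresentedGroup.of 0

/-- The image of the generator `y` in the Rédei group. -/
def Dy (r s : ℕ) : RedeiGroup r s := PresentedGroup.of 1

/-- The element `z = [x,y]` of the Rédei group. -/
def Dz (r s : ℕ) : RedeiGroup r s := ⁅Dx r s, Dy r s⁆

/-!
For `r = k + 1` the Rédei group is isomorphic to `Redei.Model k`, the triples `(a, b, c)` in
`(ℤ/2^r)² × ℤ/2` standing for `x^a y^b z^c`: the relations bring every element to this normal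
form, and the triples realise all of them. An automorphism `β` of the model fixes `z`, the only
nontrivial commutator, and acts on `(a, b)` through a matrix `M`, with `M^3 = 1` when `β^3 = 1`.
Modulo 2 such a matrix is either `1` or has no nonzero fixed vector. In the first case
`M^2 + M + 1` is invertible, so `M = 1` and then `β^2 = 1`, impossible for `β` of order 3. In the
second `M - 1` is invertible over `ℤ/2^r`, so a fixed element has `a = b = 0`: it is `1` or `z`.
-/

open scoped Matrix

theorem exists_zpow_mul_zpow_mul_zpow_of_mem_closure {G : Type*} [Group G] {x y : G}
    (hx : Commute x ⁅x, y⁆) (hy : Commute y ⁅x, y⁆) {g : G}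
    (hg : g ∈ Subgroup.closure {x, y}) :
    ∃ a b c : ℤ, g = x ^ a * y ^ b * ⁅x, y⁆ ^ c := by
  set z := ⁅x, y⁆ with hz
  have conj_y (a : ℤ) : y * x ^ a * y⁻¹ = x ^ a * z ^ (-a) := by
    have : y * x * y⁻¹ = x * z⁻¹ := by rw [hx.inv_right.eq, hz]; group
    rw [← conj_zpow, this, hx.inv_right.mul_zpow, inv_zpow']
  have conj_y_inv (a : ℤ) : y⁻¹ * x ^ a * y = x ^ a * z ^ a := by
    have : y⁻¹ * x * y = x * z := by
      rw [eq_comm, ← mul_right_inj y, hx.eq, ← mul_assoc, hy.eq, hz]; group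
    simpa only [inv_inv, this, hx.mul_zpow] using (conj_zpow (a := y⁻¹) (b := x) (i := a)).symm
  induction hg using Subgroup.closure_induction_left with
  | one => exact ⟨0, 0, 0, by group⟩
  | mul_left u hu g _ ih =>
    obtain ⟨a, b, c, rfl⟩ := ih
    rcases hu with rfl | rfl
    · exact ⟨a + 1, b, c, by group⟩
    · refine ⟨a, b + 1, c - a, ?_⟩
      calc u * (x ^ a * u ^ b * z ^ c) = (u * x ^ a * u⁻¹) * u ^ (b + 1) * z ^ c := by group
        _ = x ^ a * u ^ (b + 1) * (z ^ (-a) * z ^ c) := by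
          rw [conj_y, mul_assoc (x ^ a), ← (hy.zpow_zpow _ _).eq]; group
        _ = _ := by group
  | inv_mul_cancel u hu g _ ih =>
    obtain ⟨a, b, c, rfl⟩ := ih
    rcases hu with rfl | rfl
    · exact ⟨a - 1, b, c, by group⟩
    · refine ⟨a, b - 1, c + a, ?_⟩
      calc u⁻¹ * (x ^ a * u ^ b * z ^ c) = (u⁻¹ * x ^ a * u) * u ^ (b - 1) * z ^ c := by group
        _ = x ^ a * u ^ (b - 1) * (z ^ a * z ^ c) := by
          rw [conj_y_inv, mul_assoc (x ^ a), ← (hy.zpow_zpow _ _).eq]; group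
        _ = _ := by group

theorem zpow_eq_one_of_intCast_eq_zero {G : Type*} [Group G] {g : G} {n : ℕ} (hg : g ^ n = 1)
    {m : ℤ} (hm : (m : ZMod n) = 0) : g ^ m = 1 :=
  orderOf_dvd_iff_zpow_eq_one.1 <|
    (Int.natCast_dvd_natCast.2 (orderOf_dvd_of_pow_eq_one hg)).trans
      ((ZMod.intCast_zmod_eq_zero_iff_dvd _ _).1 hm)

namespace Redei

section Presentation

variable {r s : ℕ}

lemma Dx_pow_two_pow : Dx r s ^ 2 ^ r = 1 :=
  PresentedGroup.one_of_mem (x := gx ^ 2 ^ r) (by simp [redeiRels])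

lemma Dy_pow_two_pow : Dy r s ^ 2 ^ s = 1 :=
  PresentedGroup.one_of_mem (x := gy ^ 2 ^ s) (by simp [redeiRels])

lemma Dz_sq : Dz r s ^ 2 = 1 :=
  PresentedGroup.one_of_mem (x := ⁅gx, gy⁆ ^ 2) (by simp [redeiRels])

lemma commute_Dx_Dz : Commute (Dx r s) (Dz r s) :=
  commutatorElement_eq_one_iff_commute.1 <|
    PresentedGroup.one_of_mem (x := ⁅gx, ⁅gx, gy⁆⁆) (by simp [redeiRels])

lemma commute_Dy_Dz : Commute (Dy r s) (Dz r s) :=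
  commutatorElement_eq_one_iff_commute.1 <|
    PresentedGroup.one_of_mem (x := ⁅gy, ⁅gx, gy⁆⁆) (by simp [redeiRels])

lemma closure_Dx_Dy : Subgroup.closure {Dx r s, Dy r s} = ⊤ := by
  rw [← PresentedGroup.closure_range_of]
  congr
  ext
  simp [Fin.exists_fin_two, Dx, Dy, eq_comm]

end Presentation

lemma exists_eq_Dx_zpow_mul_Dy_zpow_mul_Dz_zpow {r s : ℕ} (g : RedeiGroup r s) :
    ∃ a b c : ℤ, g = Dx r s ^ a * Dy r s ^ b * Dz r s ^ c :=
  exists_zpow_mul_zpow_mul_zpow_of_mem_closure commute_Dx_Dz commute_Dy_Dz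
    (closure_Dx_Dy ▸ Subgroup.mem_top g)

def χ (k : ℕ) : ZMod (2 ^ (k + 1)) →+* ZMod 2 :=
  ZMod.castHom (dvd_pow_self 2 k.succ_ne_zero) _

lemma zmod_two_eq_zero_or_one (t : ZMod 2) : t = 0 ∨ t = 1 := by
  revert t; decide

section Reduction

variable {k : ℕ}

lemma isUnit_of_isUnit_χ {t : ZMod (2 ^ (k + 1))} (ht : IsUnit (χ k t)) : IsUnit t := by
  rw [isUnit_iff_ne_zero, χ, ZMod.castHom_apply, ZMod.cast_eq_val,
    ZMod.natCast_ne_zero_iff_odd] at ht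
  have := (ZMod.isUnit_iff_coprime t.val _).2 ((Nat.coprime_two_right.2 ht).pow_right (k + 1))
  rwa [ZMod.natCast_zmod_val] at this

lemma eq_one_or_det_sub_one_ne_zero_of_pow_three_eq_one (N : Matrix (Fin 2) (Fin 2) (ZMod 2))
    (hN : N ^ 3 = 1) : N = 1 ∨ (N - 1).det ≠ 0 := by
  revert N; decide

lemma eq_one_or_isUnit_det_sub_one {M : Matrix (Fin 2) (Fin 2) (ZMod (2 ^ (k + 1)))}
    (hM : M ^ 3 = 1) : M = 1 ∨ IsUnit (M - 1).det := by
  have hN3 : ((χ k).mapMatrix M) ^ 3 = 1 := by rw [← map_pow, hM, map_one]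
  rcases eq_one_or_det_sub_one_ne_zero_of_pow_three_eq_one _ hN3 with hN | hN
  · left
    have hunit : IsUnit (M ^ 2 + M + 1) := by
      refine (Matrix.isUnit_iff_isUnit_det _).2 (isUnit_of_isUnit_χ ?_)
      rw [RingHom.map_det, map_add, map_add, map_pow, map_one, hN]
      decide
    have : (M - 1) * (M ^ 2 + M + 1) = 0 := by
      rw [← sub_eq_zero.2 hM]; noncomm_ring
    exact sub_eq_zero.1 (hunit.mul_left_eq_zero.1 this)
  · right
    exact isUnit_of_isUnit_χ (by rw [RingHom.map_det, map_sub, map_one]; exact hN.isUnit)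

end Reduction

/-- `⟨a, b, c⟩` stands for `x^a y^b z^c`; the correction term in the product comes from
`y^b x^a' = x^a' y^b z^(a' b)`. -/
@[ext]
structure Model (k : ℕ) where
  a : ZMod (2 ^ (k + 1))
  b : ZMod (2 ^ (k + 1))
  c : ZMod 2

namespace Model

variable {k : ℕ}

instance : Mul (Model k) :=
  ⟨fun g h => ⟨g.a + h.a, g.b + h.b, g.c + h.c + χ k g.b * χ k h.a⟩⟩
instance : One (Model k) := ⟨⟨0, 0, 0⟩⟩
instance : Inv (Model k) := ⟨fun g => ⟨-g.a, -g.b, g.c + χ k g.b * χ k g.a⟩⟩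

@[simp] lemma mul_a (g h : Model k) : (g * h).a = g.a + h.a := rfl
@[simp] lemma mul_b (g h : Model k) : (g * h).b = g.b + h.b := rfl
@[simp] lemma mul_c (g h : Model k) : (g * h).c = g.c + h.c + χ k g.b * χ k h.a := rfl
@[simp] lemma one_a : (1 : Model k).a = 0 := rfl
@[simp] lemma one_b : (1 : Model k).b = 0 := rfl
@[simp] lemma one_c : (1 : Model k).c = 0 := rfl
@[simp] lemma inv_a (g : Model k) : g⁻¹.a = -g.a := rfl
@[simp] lemma inv_b (g : Model k) : g⁻¹.b = -g.b := rfl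
@[simp] lemma inv_c (g : Model k) : g⁻¹.c = g.c + χ k g.b * χ k g.a := rfl

instance : Group (Model k) where
  mul_assoc g h l := by ext <;> simp only [mul_a, mul_b, mul_c, map_add] <;> ring
  one_mul g := by ext <;> simp
  mul_one g := by ext <;> simp
  inv_mul_cancel g := by
    ext <;> simp only [mul_a, mul_b, mul_c, inv_a, inv_b, inv_c, one_a, one_b, one_c, map_neg]
    · ring
    · ring
    · ring_nf; reduce_mod_char

lemma commutatorElement_eq (g h : Model k) :
    ⁅g, h⁆ = ⟨0, 0, χ k g.b * χ k h.a - χ k g.a * χ k h.b⟩ := by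
  ext <;>
    simp only [commutatorElement_def, mul_a, mul_b, mul_c, inv_a, inv_b, inv_c, map_add, map_neg]
  · ring
  · ring
  · ring_nf; reduce_mod_char

lemma zpow_eq (g : Model k) (hg : χ k g.b * χ k g.a = 0) (n : ℤ) :
    g ^ n = ⟨n * g.a, n * g.b, n * g.c⟩ := by
  induction n using Int.induction_on with
  | zero => ext <;> simp
  | succ i ih =>
    rw [zpow_add_one, ih]
    ext
    · simp only [mul_a]; push_cast; ring
    · simp only [mul_b]; push_cast; ring
    · simp only [mul_c, map_mul, map_intCast]; push_cast; linear_combination (i : ZMod 2) * hg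
  | pred i ih =>
    rw [zpow_sub_one, ih]
    ext
    · simp only [mul_a, inv_a]; push_cast; ring
    · simp only [mul_b, inv_b]; push_cast; ring
    · simp only [mul_c, inv_c, inv_a, map_mul, map_neg, map_intCast]; push_cast
      linear_combination (norm := ring_nf) (1 + i : ZMod 2) * hg
      reduce_mod_char

def x : Model k := ⟨1, 0, 0⟩
def y : Model k := ⟨0, 1, 0⟩
def z : Model k := ⟨0, 0, 1⟩

lemma commutatorElement_x_y : ⁅(x : Model k), (y : Model k)⁆ = z := by
  rw [commutatorElement_eq]; ext <;> simp [x, y, z]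

lemma z_mem_center : (z : Model k) ∈ Subgroup.center (Model k) :=
  Subgroup.mem_center_iff.2 fun g => by ext <;> simp [z]; ring

lemma z_ne_one : (z : Model k) ≠ 1 := fun h => by simpa [z] using congrArg c h

lemma z_mul_z : (z : Model k) * z = 1 := by ext <;> simp [z]; rfl

lemma x_zpow_mul_y_zpow_mul_z_zpow (a b c : ℤ) :
    (x : Model k) ^ a * y ^ b * z ^ c = ⟨a, b, c⟩ := by
  rw [zpow_eq x (by simp [x]), zpow_eq y (by simp [y]), zpow_eq z (by simp [z])]
  ext <;> simp [x, y, z]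

lemma exists_eq_x_zpow_mul_y_zpow_mul_z_zpow (g : Model k) :
    ∃ a b c : ℤ, g = x ^ a * y ^ b * z ^ c :=
  ⟨g.a.cast, g.b.cast, g.c.cast, by simp [x_zpow_mul_y_zpow_mul_z_zpow]⟩

def vec (g : Model k) : Fin 2 → ZMod (2 ^ (k + 1)) := ![g.a, g.b]

@[simp] lemma vec_mul (g h : Model k) : vec (g * h) = vec g + vec h := by
  ext i; fin_cases i <;> rfl

@[simp] lemma vec_one : vec (1 : Model k) = 0 := by
  ext i; fin_cases i <;> rfl

@[simp] lemma vec_z : vec (z : Model k) = 0 := by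
  ext i; fin_cases i <;> rfl

@[simp] lemma vec_zpow (g : Model k) (n : ℤ) : vec (g ^ n) = n • vec g := by
  induction n using Int.induction_on with
  | zero => rw [zpow_zero, zero_smul, vec_one]
  | succ i ih => rw [zpow_add_one, vec_mul, ih, add_smul, one_smul]
  | pred i ih =>
    rw [zpow_sub_one, sub_smul, one_smul, ← ih, eq_sub_iff_add_eq, ← vec_mul,
      inv_mul_cancel_right]

lemma vec_surjective : Function.Surjective (vec : Model k → _) :=
  fun v => ⟨⟨v 0, v 1, 0⟩, by ext i; fin_cases i <;> rfl⟩

lemma eq_or_eq_mul_z_of_vec_eq {g h : Model k} (hv : vec g = vec h) : h = g ∨ h = g * z := by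
  have ha : h.a = g.a := (congrFun hv 0).symm
  have hb : h.b = g.b := (congrFun hv 1).symm
  obtain hc | hc : h.c = g.c ∨ h.c = g.c + 1 := by
    rcases zmod_two_eq_zero_or_one (h.c - g.c) with hc | hc
    · exact .inl (sub_eq_zero.1 hc)
    · exact .inr (eq_add_of_sub_eq' hc)
  · exact .inl (Model.ext ha hb hc)
  · exact .inr (by ext <;> simp [ha, hb, hc, z])

lemma map_z (β : MulAut (Model k)) : β z = z := by
  have h := commutatorElement_eq (β x) (β y)
  rw [← map_commutatorElement, commutatorElement_x_y] at h
  rcases zmod_two_eq_zero_or_one (χ k (β x).b * χ k (β y).a - χ k (β x).a * χ k (β y).b)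
    with ht | ht
  · rw [ht] at h
    exact absurd (β.injective (h.trans (map_one β).symm)) z_ne_one
  · rw [h, ht]; rfl

def linearPart (β : MulAut (Model k)) : Matrix (Fin 2) (Fin 2) (ZMod (2 ^ (k + 1))) :=
  !![(β x).a, (β y).a; (β x).b, (β y).b]

lemma vec_map (β : MulAut (Model k)) (g : Model k) : vec (β g) = linearPart β *ᵥ vec g := by
  have hx : vec (β x) = linearPart β *ᵥ vec x := by
    ext i; fin_cases i <;> simp [vec, linearPart, x, Matrix.mulVec, dotProduct, Fin.sum_univ_two]
  have hy : vec (β y) = linearPart β *ᵥ vec y := by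
    ext i; fin_cases i <;> simp [vec, linearPart, y, Matrix.mulVec, dotProduct, Fin.sum_univ_two]
  obtain ⟨a, b, c, rfl⟩ := exists_eq_x_zpow_mul_y_zpow_mul_z_zpow g
  simp only [map_mul, map_zpow, map_z, vec_mul, vec_zpow, vec_z, hx, hy, Matrix.mulVec_add,
    Matrix.mulVec_smul, Matrix.mulVec_zero]

def linearPartHom : MulAut (Model k) →* Matrix (Fin 2) (Fin 2) (ZMod (2 ^ (k + 1))) where
  toFun := linearPart
  map_one' := by ext i j; fin_cases i <;> fin_cases j <;> rfl
  map_mul' β γ := Matrix.mulVec_injective <| funext fun v => by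
    obtain ⟨g, rfl⟩ := vec_surjective v
    rw [← Matrix.mulVec_mulVec, ← vec_map, ← vec_map, ← vec_map]
    rfl

lemma sq_eq_one_of_linearPart_eq_one {β : MulAut (Model k)} (hβ : linearPart β = 1) :
    β ^ 2 = 1 := by
  have h (g : Model k) : β g = g ∨ β g = g * z :=
    eq_or_eq_mul_z_of_vec_eq (by rw [vec_map, hβ, Matrix.one_mulVec])
  refine MulEquiv.ext fun g => ?_
  rcases h g with hg | hg <;> simp [pow_two, hg, map_z, mul_assoc, z_mul_z]

lemma eq_one_or_eq_z_of_map_eq {β : MulAut (Model k)} (hβ : IsUnit (linearPart β - 1).det)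
    {g : Model k} (hg : β g = g) : g = 1 ∨ g = z := by
  have hv : (linearPart β - 1) *ᵥ vec g = (linearPart β - 1) *ᵥ vec 1 := by
    rw [Matrix.sub_mulVec, ← vec_map, hg, Matrix.one_mulVec, sub_self, vec_one,
      Matrix.mulVec_zero]
  simpa using eq_or_eq_mul_z_of_vec_eq
    (Matrix.mulVec_injective_of_isUnit ((Matrix.isUnit_iff_isUnit_det _).2 hβ) hv).symm

theorem eq_one_or_eq_z_of_orderOf_eq_three {β : MulAut (Model k)} (hβ : orderOf β = 3)
    {g : Model k} (hg : β g = g) : g = 1 ∨ g = z := by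
  have hM : linearPart β ^ 3 = 1 :=
    calc linearPart β ^ 3 = linearPartHom (β ^ orderOf β) := by rw [map_pow, hβ]; rfl
      _ = 1 := by rw [pow_orderOf_eq_one, map_one]
  rcases eq_one_or_isUnit_det_sub_one hM with h | h
  · have := orderOf_dvd_of_pow_eq_one (sq_eq_one_of_linearPart_eq_one h)
    rw [hβ] at this
    norm_num at this
  · exact eq_one_or_eq_z_of_map_eq h hg

end Model

section Isomorphism

variable (k : ℕ)

lemma model_satisfies_redeiRels : ∀ w ∈ redeiRels (k + 1) (k + 1),
    FreeGroup.lift (![Model.x, Model.y] : Fin 2 → Model k) w = 1 := by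
  have hx : FreeGroup.lift (![Model.x, Model.y] : Fin 2 → Model k) gx = Model.x :=
    FreeGroup.lift_apply_of
  have hy : FreeGroup.lift (![Model.x, Model.y] : Fin 2 → Model k) gy = Model.y :=
    FreeGroup.lift_apply_of
  have hz (g : Model k) : ⁅g, Model.z⁆ = 1 :=
    commutatorElement_eq_one_iff_commute.2 (Subgroup.mem_center_iff.1 Model.z_mem_center g)
  intro w hw
  simp only [redeiRels, Set.mem_insert_iff, Set.mem_singleton_iff] at hw
  rcases hw with rfl | rfl | rfl | rfl | rfl <;>
    simp only [map_pow, map_commutatorElement, hx, hy, Model.commutatorElement_x_y, hz]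
  · rw [← zpow_natCast, Model.zpow_eq _ (by simp [Model.x])]
    ext <;> simp [Model.x]
    exact_mod_cast ZMod.natCast_self _
  · rw [← zpow_natCast, Model.zpow_eq _ (by simp [Model.y])]
    ext <;> simp [Model.y]
    exact_mod_cast ZMod.natCast_self _
  · rw [pow_two, Model.z_mul_z]

def toModel : RedeiGroup (k + 1) (k + 1) →* Model k :=
  PresentedGroup.toGroup (model_satisfies_redeiRels k)

lemma toModel_Dx : toModel k (Dx _ _) = Model.x := PresentedGroup.toGroup.of _

lemma toModel_Dy : toModel k (Dy _ _) = Model.y := PresentedGroup.toGroup.of _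

lemma toModel_Dz : toModel k (Dz _ _) = Model.z := by
  rw [Dz, map_commutatorElement, toModel_Dx, toModel_Dy, Model.commutatorElement_x_y]

lemma toModel_zpow_mul_zpow_mul_zpow (a b c : ℤ) :
    toModel k (Dx _ _ ^ a * Dy _ _ ^ b * Dz _ _ ^ c) = ⟨a, b, c⟩ := by
  rw [map_mul, map_mul, map_zpow, map_zpow, map_zpow, toModel_Dx, toModel_Dy, toModel_Dz,
    Model.x_zpow_mul_y_zpow_mul_z_zpow]

lemma toModel_bijective : Function.Bijective (toModel k) := by
  refine ⟨(injective_iff_map_eq_one _).2 fun g hg => ?_, fun g => ?_⟩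
  · obtain ⟨a, b, c, rfl⟩ := exists_eq_Dx_zpow_mul_Dy_zpow_mul_Dz_zpow g
    rw [toModel_zpow_mul_zpow_mul_zpow] at hg
    rw [zpow_eq_one_of_intCast_eq_zero Dx_pow_two_pow (congrArg Model.a hg),
      zpow_eq_one_of_intCast_eq_zero Dy_pow_two_pow (congrArg Model.b hg),
      zpow_eq_one_of_intCast_eq_zero Dz_sq (congrArg Model.c hg), one_mul, one_mul]
  · obtain ⟨a, b, c, rfl⟩ := Model.exists_eq_x_zpow_mul_y_zpow_mul_z_zpow g
    exact ⟨_, by rw [toModel_zpow_mul_zpow_mul_zpow, Model.x_zpow_mul_y_zpow_mul_z_zpow]⟩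

noncomputable def equivModel : RedeiGroup (k + 1) (k + 1) ≃* Model k :=
  MulEquiv.ofBijective (toModel k) (toModel_bijective k)

end Isomorphism

end Redei

theorem stmt14 (r : ℕ) (hr : 2 ≤ r) (α : MulAut (RedeiGroup r r))
    (hα : orderOf α = 3) :
    Dz r r ∈ Subgroup.center (RedeiGroup r r) ∧ Dz r r ≠ 1 ∧ α (Dz r r) = Dz r r ∧
    ∀ g ∈ Subgroup.center (RedeiGroup r r), α g = g → g = 1 ∨ g = Dz r r := by
  obtain ⟨k, rfl⟩ : ∃ k, r = k + 1 := ⟨r - 1, by omega⟩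
  let e := Redei.equivModel k
  let β := MulAut.congr e α
  have hβ : orderOf β = 3 := by rw [MulEquiv.orderOf_eq, hα]
  have hβe (g : RedeiGroup (k + 1) (k + 1)) : β (e g) = e (α g) := by simp [β]
  have hz : e (Dz _ _) = Redei.Model.z := Redei.toModel_Dz k
  refine ⟨Subgroup.mem_center_iff.2 fun g => e.injective ?_, fun h => ?_, e.injective ?_, ?_⟩
  · rw [map_mul, map_mul, hz]
    exact Subgroup.mem_center_iff.1 Redei.Model.z_mem_center (e g)
  · exact Redei.Model.z_ne_one (by rw [← hz, h, map_one])
  · rw [← hβe, hz, Redei.Model.map_z]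
  · intro g _ hg
    rcases Redei.Model.eq_one_or_eq_z_of_orderOf_eq_three hβ (g := e g) (by rw [hβe, hg])
      with h | h
    · exact .inl (e.injective (by rw [h, map_one]))
    · exact .inr (e.injective (by rw [h, hz]))
end

section
/- Any automorphism of order 3 of the group C_{2^(r-1)} × C_{2^(r-1)} (r ≥ 2) is fixed-point-free, i.e., fixes only the identity. -/
/-!
Transport `α` to a `2 × 2` matrix `M` over `R = ZMod 2^(r-1)` with `M ^ 3 = 1` and `M ≠ 1`.
Units of `R` are detected modulo `2`, so `R` has no nontrivial cube root of unity
(`x ^ 2 + x + 1 ≡ 1 mod 2` is a unit); hence `det M = 1` and Cayley–Hamilton gives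
`(t ^ 2 - 1) • M = (t + 1) • 1` for `t = trace M`. If `t` were even, `M` would be a scalar cube
root of unity, i.e. `M = 1`. So `t` is odd and `det (M - 1) = 2 - t` is a unit: `M` fixes no
nonzero vector.
-/

lemma eq_one_of_pow_three_eq_one {R : Type*} [CommRing R] (π : R →+* ZMod 2) [IsLocalHom π]
    {x : R} (h : x ^ 3 = 1) : x = 1 := by
  have hπ : π (x ^ 2 + x + 1) = 1 := by
    have key : ∀ y : ZMod 2, y ^ 2 + y + 1 = 1 := by decide
    simpa using key (π x)
  have hu : IsUnit (x ^ 2 + x + 1) := isUnit_of_map_unit π _ (hπ ▸ isUnit_one)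
  have hfac : (x - 1) * (x ^ 2 + x + 1) = 0 := by linear_combination h
  exact sub_eq_zero.mp (hu.mul_left_eq_zero.mp hfac)

namespace Matrix

variable {R : Type*} [CommRing R]

lemma sq_fin_two (M : Matrix (Fin 2) (Fin 2) R) : M ^ 2 = M.trace • M - M.det • 1 := by
  ext i j
  fin_cases i <;> fin_cases j <;>
    simp [sq, mul_apply, Fin.sum_univ_two, trace_fin_two, det_fin_two] <;> ring

lemma det_sub_one_fin_two (M : Matrix (Fin 2) (Fin 2) R) :
    (M - 1).det = M.det - M.trace + 1 := by
  simp [det_fin_two, trace_fin_two]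
  ring

theorem isUnit_sub_one_of_pow_three_eq_one (π : R →+* ZMod 2) [IsLocalHom π]
    {M : Matrix (Fin 2) (Fin 2) R} (h3 : M ^ 3 = 1) (h1 : M ≠ 1) : IsUnit (M - 1) := by
  have hdet : M.det = 1 := eq_one_of_pow_three_eq_one π (by rw [← det_pow, h3, det_one])
  set t := M.trace
  have hsq : M ^ 2 = t • M - 1 := by rw [sq_fin_two, hdet, one_smul]
  have hscalar : (t ^ 2 - 1) • M = (t + 1) • 1 := by
    calc (t ^ 2 - 1) • M = t • (t • M - 1) - M + t • 1 := by module
      _ = (t • M - 1) * M + t • 1 := by rw [sub_mul, smul_mul_assoc, one_mul, ← sq, hsq]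
      _ = M ^ 3 + t • 1 := by rw [← hsq, ← pow_succ]
      _ = (t + 1) • 1 := by rw [h3]; module
  have ht : π t = 1 := by
    rcases (by decide : ∀ y : ZMod 2, y = 0 ∨ y = 1) (π t) with ht | ht
    · exfalso
      have hu : IsUnit (t ^ 2 - 1) := isUnit_of_map_unit π _ (by simp [ht])
      set c := hu.unit⁻¹ * (t + 1)
      have hM : M = c • 1 := by
        rw [← smul_smul, ← hscalar, smul_smul, hu.val_inv_mul, one_smul]
      have hc : c ^ 3 = 1 := by
        rw [hM, smul_pow, one_pow] at h3
        simpa using congr_fun₂ h3 0 0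
      exact h1 (by rw [hM, eq_one_of_pow_three_eq_one π hc, one_smul])
    · exact ht
  rw [isUnit_iff_isUnit_det, det_sub_one_fin_two, hdet]
  exact isUnit_of_map_unit π _ (by simp [t, ht])

end Matrix

theorem Module.End.eq_zero_of_apply_eq_self {R V : Type*} [CommRing R] [AddCommGroup V]
    [Module R V] (π : R →+* ZMod 2) [IsLocalHom π] (b : Module.Basis (Fin 2) R V)
    {f : Module.End R V} (h3 : f ^ 3 = 1) (h1 : f ≠ 1) {v : V} (hv : f v = v) : v = 0 := by
  let Φ := LinearMap.toMatrixAlgEquiv b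
  have hunit : IsUnit (f - 1) := by
    have := Matrix.isUnit_sub_one_of_pow_three_eq_one π (M := Φ f)
      (by rw [← map_pow, h3, map_one]) (by rwa [Ne, ← map_one Φ, Φ.injective.eq_iff])
    simpa using this.map Φ.symm
  exact ((Module.End.isUnit_iff _).mp hunit).injective (by simp [hv])

lemma ZMod.isLocalHom_castHom_prime_pow {p k : ℕ} [Fact p.Prime] (hk : k ≠ 0) :
    IsLocalHom (ZMod.castHom (dvd_pow_self p hk) (ZMod p)) where
  map_nonunit a ha := by
    rw [← ZMod.natCast_zmod_val a,
      ZMod.isUnit_natCast_iff_not_dvd_pow Fact.out (Nat.pos_of_ne_zero hk)]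
    rwa [← ZMod.natCast_zmod_val a, map_natCast, isUnit_iff_ne_zero, Ne,
      ZMod.natCast_eq_zero_iff] at ha

namespace MulAut

variable (n : ℕ) (A B : Type*) [AddCommGroup A] [Module (ZMod n) A]
  [AddCommGroup B] [Module (ZMod n) B]

def toZModLinearEnd :
    MulAut (Multiplicative A × Multiplicative B) →* Module.End (ZMod n) (A × B) where
  toFun α := (AddMonoidHom.toMultiplicative.symm
    ((MulEquiv.prodMultiplicative A B).symm.toMonoidHom.comp
      (α.toMonoidHom.comp (MulEquiv.prodMultiplicative A B).toMonoidHom))).toZModLinearMap n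
  map_one' := rfl
  map_mul' _ _ := rfl

lemma toZModLinearEnd_apply (α : MulAut (Multiplicative A × Multiplicative B))
    (g : Multiplicative A × Multiplicative B) :
    toZModLinearEnd n A B α (g.1.toAdd, g.2.toAdd) = ((α g).1.toAdd, (α g).2.toAdd) :=
  rfl

lemma toZModLinearEnd_injective : Function.Injective (toZModLinearEnd n A B) :=
  fun _ _ h ↦ MulEquiv.ext fun g ↦ congr_arg (fun v ↦ (Multiplicative.ofAdd v.1,
    Multiplicative.ofAdd v.2)) (LinearMap.congr_fun h (g.1.toAdd, g.2.toAdd))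

end MulAut

theorem stmt15 (r : ℕ) (hr : 2 ≤ r)
    (α : MulAut (Multiplicative (ZMod (2 ^ (r - 1))) ×
      Multiplicative (ZMod (2 ^ (r - 1)))))
    (hα : orderOf α = 3) :
    ∀ g, α g = g → g = 1 := by
  intro g hg
  have hk : r - 1 ≠ 0 := by omega
  have := ZMod.isLocalHom_castHom_prime_pow (p := 2) hk
  set f := MulAut.toZModLinearEnd (2 ^ (r - 1)) _ _ α
  have hf : orderOf f = 3 := by
    rw [orderOf_injective _ (MulAut.toZModLinearEnd_injective _ _ _), hα]
  have hv := Module.End.eq_zero_of_apply_eq_self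
    (ZMod.castHom (dvd_pow_self 2 hk) (ZMod 2)) (Module.Basis.finTwoProd _)
    (hf ▸ pow_orderOf_eq_one f) (by rintro h; simp [h] at hf)
    (v := (g.1.toAdd, g.2.toAdd)) (by rw [MulAut.toZModLinearEnd_apply, hg])
  simpa [Prod.ext_iff] using hv
end

section
/- Let D = ⟨x, y | x^(2^r) = y^(2^r) = [x,y]² = [x,[x,y]] = [y,[x,y]] = 1⟩ with r ≥ 2, and let α ∈ Aut(D) have order 3. Then the restriction of α to the center Z(D) is an automorphism of Z(D) of order 3. -/
open scoped commutatorElement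

/-!
Suppose `α` fixes `Z(D)` pointwise and write `α g = g * δ`. Every square is central, so
`α g ^ 2 = α (g ^ 2) = g ^ 2`; in `D` two elements with the same square differ by a central
element, so `δ` is central and hence fixed by `α`. Then `α ^ 3 = 1` gives `δ ^ 3 = 1` and
`(g * δ) ^ 2 = g ^ 2` gives `δ ^ 2 = 1`, so `δ = 1` and `α = 1`, contradicting `orderOf α = 3`.

Both facts about squares come from the exponent sums `e_x, e_y` of `x` and `y`, which are
well defined modulo 4 because `r, s ≥ 2`: since `z` is central of order 2, `⁅g, x⁆ = z ^ e_y g`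
and `⁅g, y⁆ = z ^ e_x g`, so `g` is central as soon as `e_x g` and `e_y g` are even. This holds
for `g ^ 2`, and for `g⁻¹ * h` when `g ^ 2 = h ^ 2`, since then `2 e (g⁻¹ * h) ≡ 0 [MOD 4]`.
-/

theorem commutatorElement_eq_of_closure_eq_top {G : Type*} [Group G] {S : Set G}
    (hS : Subgroup.closure S = ⊤) (t : G) (ψ : G →* Subgroup.center G)
    (h : ∀ s ∈ S, ⁅s, t⁆ = ψ s) (g : G) : ⁅g, t⁆ = ψ g := by
  have hcomm : ∀ (a : G) (c : Subgroup.center G), a * c = c * a := fun a c =>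
    Subgroup.mem_center_iff.mp c.2 a
  have hg : g ∈ Subgroup.closure S := hS ▸ Subgroup.mem_top g
  induction hg using Subgroup.closure_induction with
  | mem s hs => exact h s hs
  | one => simp
  | mul a b _ _ iha ihb =>
    rw [commutatorElement_mul_left_eq_conj_mul, ihb, hcomm, mul_inv_cancel_right, iha, map_mul,
      Subgroup.coe_mul, hcomm]
  | inv a _ iha =>
    rw [commutatorElement_inv_left, ← commutatorElement_inv, iha, ← Subgroup.coe_inv, hcomm,
      inv_mul_cancel_right, map_inv]

theorem Multiplicative.zmod_pow_eq_one_of_dvd {n m : ℕ} (h : n ∣ m)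
    (a : Multiplicative (ZMod n)) : a ^ m = 1 := by
  obtain ⟨k, rfl⟩ := h
  rw [pow_mul, ← ofAdd_toAdd a, ← ofAdd_nsmul, nsmul_eq_mul, ZMod.natCast_self, zero_mul,
    ofAdd_zero, one_pow]

namespace MulAut

variable {G : Type*} [Group G]

theorem eq_one_of_pow_three_eq_one_of_fixes_center (α : MulAut G) (h3 : α ^ 3 = 1)
    (hfix : ∀ g ∈ Subgroup.center G, α g = g)
    (hsq : ∀ g : G, g ^ 2 ∈ Subgroup.center G)
    (hsq_inj : ∀ g h : G, g ^ 2 = h ^ 2 → g⁻¹ * h ∈ Subgroup.center G) :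
    α = 1 := by
  ext g
  set δ := g⁻¹ * α g
  have hαg : α g = g * δ := (mul_inv_cancel_left g (α g)).symm
  have hδ : δ ∈ Subgroup.center G :=
    hsq_inj _ _ (by rw [← map_pow, hfix _ (hsq g)])
  have hαδ : α δ = δ := hfix δ hδ
  have hαn : ∀ n : ℕ, (α ^ n) g = g * δ ^ n := by
    intro n
    induction n with
    | zero => simp
    | succ n ih => rw [pow_succ', mul_apply, ih, map_mul, map_pow, hαg, hαδ, mul_assoc, pow_succ']
  have hδ3 : δ ^ 3 = 1 := by simpa [h3] using (hαn 3).symm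
  have hδ2 : δ ^ 2 = 1 := by
    have h : (g * δ) ^ 2 = g ^ 2 := by rw [← hαg, ← map_pow, hfix _ (hsq g)]
    rwa [Commute.mul_pow (Subgroup.mem_center_iff.mp hδ g), mul_eq_left] at h
  have hδ1 : δ = 1 := by simpa [pow_succ, hδ2] using hδ3
  rw [hαg, hδ1, mul_one, one_apply]

theorem coe_pow_apply_of_coe_apply {H : Subgroup G} {α : MulAut G} {β : MulAut H}
    (hβ : ∀ g : H, (β g : G) = α g) (n : ℕ) (g : H) : ((β ^ n) g : G) = (α ^ n) g := by
  induction n with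
  | zero => rfl
  | succ n ih => rw [pow_succ', mul_apply, hβ, ih, pow_succ', mul_apply]

end MulAut

namespace RedeiGroup

open Subgroup

variable {r s : ℕ}

theorem Dz_sq : Dz r s ^ 2 = 1 :=
  PresentedGroup.one_of_mem (x := ⁅gx, gy⁆ ^ 2) (by simp [redeiRels])

theorem Dz_inv : (Dz r s)⁻¹ = Dz r s :=
  inv_eq_of_mul_eq_one_right (by rw [← sq, Dz_sq])

theorem commutatorElement_Dx_Dz : ⁅Dx r s, Dz r s⁆ = 1 :=
  PresentedGroup.one_of_mem (x := ⁅gx, ⁅gx, gy⁆⁆) (by simp [redeiRels])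

theorem commutatorElement_Dy_Dz : ⁅Dy r s, Dz r s⁆ = 1 :=
  PresentedGroup.one_of_mem (x := ⁅gy, ⁅gx, gy⁆⁆) (by simp [redeiRels])

theorem mem_center_of_commutatorElement (g : RedeiGroup r s) (hx : ⁅g, Dx r s⁆ = 1)
    (hy : ⁅g, Dy r s⁆ = 1) : g ∈ center (RedeiGroup r s) := by
  rw [← centralizer_univ, ← coe_top, ← PresentedGroup.closure_range_of, centralizer_closure,
    mem_centralizer_iff]
  rintro _ ⟨i, rfl⟩
  fin_cases i
  exacts [(commutatorElement_eq_one_iff_mul_comm.mp hx).symm,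
    (commutatorElement_eq_one_iff_mul_comm.mp hy).symm]

theorem Dz_mem_center : Dz r s ∈ center (RedeiGroup r s) :=
  mem_center_of_commutatorElement (Dz r s)
    (by rw [← commutatorElement_inv, commutatorElement_Dx_Dz, inv_one])
    (by rw [← commutatorElement_inv, commutatorElement_Dy_Dz, inv_one])

def exponentSumMod4 (hr : 2 ≤ r) (hs : 2 ≤ s) :
    RedeiGroup r s →* (Fin 2 → Multiplicative (ZMod 4)) :=
  PresentedGroup.toGroup (f := fun i => Pi.mulSingle i (Multiplicative.ofAdd 1)) <| by
    have hcomm : ∀ a b : Fin 2 → Multiplicative (ZMod 4), ⁅a, b⁆ = 1 := fun a b =>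
      commutatorElement_eq_one_iff_mul_comm.mpr (mul_comm a b)
    simp only [redeiRels, Set.mem_insert_iff, Set.mem_singleton_iff]
    rintro w (rfl | rfl | rfl | rfl | rfl)
    · rw [map_pow, gx, FreeGroup.lift_apply_of, ← Pi.mulSingle_pow, Multiplicative.zmod_pow_eq_one_of_dvd (pow_dvd_pow 2 hr),
        Pi.mulSingle_one]
    · rw [map_pow, gy, FreeGroup.lift_apply_of, ← Pi.mulSingle_pow, Multiplicative.zmod_pow_eq_one_of_dvd (pow_dvd_pow 2 hs),
        Pi.mulSingle_one]
    · rw [map_pow, map_commutatorElement, hcomm, one_pow]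
    · rw [map_commutatorElement, hcomm]
    · rw [map_commutatorElement, hcomm]

variable (r s) in
/-- `Multiplicative.ofAdd k ↦ z ^ k`. -/
def powDz : Multiplicative (ZMod 4) →* center (RedeiGroup r s) :=
  AddMonoidHom.toMultiplicativeLeft
    (ZMod.lift 4 ⟨zmultiplesHom _ (Additive.ofMul ⟨Dz r s, Dz_mem_center⟩), by
      rw [zmultiplesHom_apply, ← ofMul_zpow, ← ofMul_one]
      congr 1
      ext
      simp only [Nat.cast_ofNat, zpow_ofNat, SubmonoidClass.mk_pow, OneMemClass.coe_one]
      rw [show 4 = 2 * 2 from rfl, pow_mul, Dz_sq, one_pow]⟩)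

theorem powDz_ofAdd_one : (powDz r s (Multiplicative.ofAdd 1) : RedeiGroup r s) = Dz r s := by
  rw [powDz, AddMonoidHom.toMultiplicativeLeft_apply_apply, toAdd_ofAdd, ← Int.cast_one,
    ZMod.lift_coe, zmultiplesHom_apply, one_zsmul, toMul_ofMul]

theorem exponentSumMod4_of (hr : 2 ≤ r) (hs : 2 ≤ s) (i : Fin 2) :
    exponentSumMod4 hr hs (PresentedGroup.of i) = Pi.mulSingle i (Multiplicative.ofAdd 1) :=
  PresentedGroup.toGroup.of _

theorem commutatorElement_Dx (hr : 2 ≤ r) (hs : 2 ≤ s) (g : RedeiGroup r s) :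
    ⁅g, Dx r s⁆ = powDz r s (exponentSumMod4 hr hs g 1) := by
  refine commutatorElement_eq_of_closure_eq_top (PresentedGroup.closure_range_of _) _
    ((powDz r s).comp ((Pi.evalMonoidHom _ 1).comp (exponentSumMod4 hr hs))) ?_ g
  rintro _ ⟨i, rfl⟩
  fin_cases i
  · simp [exponentSumMod4_of, Dx]
  · simp only [Fin.mk_one, Fin.isValue, Dx, MonoidHom.coe_comp, Pi.coe_evalMonoidHom,
      Function.comp_apply, Function.eval, exponentSumMod4_of, Pi.mulSingle_eq_same]
    rw [powDz_ofAdd_one, ← Dz_inv, Dz, commutatorElement_inv]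
    rfl

theorem commutatorElement_Dy (hr : 2 ≤ r) (hs : 2 ≤ s) (g : RedeiGroup r s) :
    ⁅g, Dy r s⁆ = powDz r s (exponentSumMod4 hr hs g 0) := by
  refine commutatorElement_eq_of_closure_eq_top (PresentedGroup.closure_range_of _) _
    ((powDz r s).comp ((Pi.evalMonoidHom _ 0).comp (exponentSumMod4 hr hs))) ?_ g
  rintro _ ⟨i, rfl⟩
  fin_cases i
  · simp only [Fin.zero_eta, Fin.isValue, Dy, MonoidHom.coe_comp, Pi.coe_evalMonoidHom,
      Function.comp_apply, Function.eval, exponentSumMod4_of, Pi.mulSingle_eq_same]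
    rw [powDz_ofAdd_one]
    rfl
  · simp [exponentSumMod4_of, Dy]

theorem powDz_eq_one_of_sq_eq_one {a : Multiplicative (ZMod 4)} (ha : a ^ 2 = 1) :
    powDz r s a = 1 := by
  obtain rfl | rfl : a = 1 ∨ a = Multiplicative.ofAdd 1 ^ 2 := by revert a; decide
  · exact map_one _
  · ext
    rw [map_pow, SubgroupClass.coe_pow, powDz_ofAdd_one, Dz_sq, OneMemClass.coe_one]

theorem mem_center_of_exponentSumMod4_sq_eq_one (hr : 2 ≤ r) (hs : 2 ≤ s) {g : RedeiGroup r s}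
    (hg : exponentSumMod4 hr hs g ^ 2 = 1) : g ∈ center (RedeiGroup r s) := by
  have hcoord : ∀ i, exponentSumMod4 hr hs g i ^ 2 = 1 := fun i => congrFun hg i
  refine mem_center_of_commutatorElement g ?_ ?_
  · rw [commutatorElement_Dx hr hs, powDz_eq_one_of_sq_eq_one (hcoord 1), OneMemClass.coe_one]
  · rw [commutatorElement_Dy hr hs, powDz_eq_one_of_sq_eq_one (hcoord 0), OneMemClass.coe_one]

theorem sq_mem_center (hr : 2 ≤ r) (hs : 2 ≤ s) (g : RedeiGroup r s) :
    g ^ 2 ∈ center (RedeiGroup r s) :=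
  mem_center_of_exponentSumMod4_sq_eq_one hr hs <| by
    rw [map_pow, ← pow_mul]
    exact funext fun i => Multiplicative.zmod_pow_eq_one_of_dvd dvd_rfl _

theorem inv_mul_mem_center_of_sq_eq_sq (hr : 2 ≤ r) (hs : 2 ≤ s) {g h : RedeiGroup r s}
    (hgh : g ^ 2 = h ^ 2) : g⁻¹ * h ∈ center (RedeiGroup r s) :=
  mem_center_of_exponentSumMod4_sq_eq_one hr hs <| by
    rw [map_mul, map_inv, mul_pow, inv_pow, ← map_pow, hgh, map_pow, inv_mul_cancel]

end RedeiGroup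

theorem stmt16 (r : ℕ) (hr : 2 ≤ r) (α : MulAut (RedeiGroup r r))
    (hα : orderOf α = 3) :
    (∀ g ∈ Subgroup.center (RedeiGroup r r), α g ∈ Subgroup.center (RedeiGroup r r)) ∧
    ∀ β : MulAut (Subgroup.center (RedeiGroup r r)),
      (∀ g : Subgroup.center (RedeiGroup r r), (β g : RedeiGroup r r) = α (g : RedeiGroup r r)) →
      orderOf β = 3 := by
  have hα3 : α ^ 3 = 1 := hα ▸ pow_orderOf_eq_one α
  refine ⟨fun g hg => MulEquivClass.apply_mem_center α hg, fun β hβ => ?_⟩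
  have hβ3 : β ^ 3 = 1 := by
    ext g
    rw [MulAut.coe_pow_apply_of_coe_apply hβ, hα3]
    rfl
  refine orderOf_eq_prime hβ3 fun hβ1 => ?_
  have hα1 : α = 1 := by
    refine MulAut.eq_one_of_pow_three_eq_one_of_fixes_center α hα3 (fun g hg => ?_)
      (RedeiGroup.sq_mem_center hr hr) (fun _ _ => RedeiGroup.inv_mul_mem_center_of_sq_eq_sq hr hr)
    simpa [hβ1] using (hβ ⟨g, hg⟩).symm
  simp [hα1] at hα
end

section
/- Every matrix C = [[c₁, c₂], [c₂, c₃]] ∈ ℤ^{2×2} that is symmetric positive definite with determinant 8 and elementary divisors 1 and 8 is equivalent (via C ↦ SCSᵀ for some S ∈ GL(2,ℤ)) to exactly one of [[1,0],[0,8]] and [[3,1],[1,3]]. -/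
/-!
Gauss reduction: a positive definite form `(a, b, c)` is equivalent to a reduced one with
`|2b| ≤ a ≤ c`, and then `3a²/4 ≤ ac - b² = 8` forces `a ≤ 3`, leaving `(1,0,8)`, `(2,0,4)` and
`(3,±1,3)`. Equivalence preserves the gcd of the entries, which rules out `(2,0,4)`. The two
survivors are inequivalent because `x² + 8y²` never takes the value `3`, not even mod `8`.
-/

/-- Two integer matrices are equivalent if one is obtained from the other by
`M ↦ S * M * Sᵀ` for some `S ∈ GL(2,ℤ)`. -/
def MatEquiv (M N : Matrix (Fin 2) (Fin 2) ℤ) : Prop :=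
  ∃ S : Matrix (Fin 2) (Fin 2) ℤ, IsUnit S.det ∧ S * M * S.transpose = N

namespace MatEquiv

theorem symm {M N : Matrix (Fin 2) (Fin 2) ℤ} (h : MatEquiv M N) : MatEquiv N M := by
  obtain ⟨S, hS, rfl⟩ := h
  refine ⟨S⁻¹, Matrix.isUnit_nonsing_inv_det S hS, ?_⟩
  have hSt : IsUnit S.transpose.det := by rwa [Matrix.det_transpose]
  rw [Matrix.transpose_nonsing_inv, Matrix.mul_assoc, Matrix.mul_assoc,
    Matrix.mul_nonsing_inv _ hSt, Matrix.mul_one, ← Matrix.mul_assoc,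
    Matrix.nonsing_inv_mul _ hS, Matrix.one_mul]

theorem trans {M N P : Matrix (Fin 2) (Fin 2) ℤ} (h₁ : MatEquiv M N) (h₂ : MatEquiv N P) :
    MatEquiv M P := by
  obtain ⟨S, hS, rfl⟩ := h₁
  obtain ⟨T, hT, rfl⟩ := h₂
  refine ⟨T * S, by simpa only [Matrix.det_mul] using hT.mul hS, ?_⟩
  simp only [Matrix.transpose_mul, Matrix.mul_assoc]

theorem dvd_entries {M N : Matrix (Fin 2) (Fin 2) ℤ} (h : MatEquiv M N) {d : ℤ}
    (hd : ∀ i j, d ∣ M i j) (i j : Fin 2) : d ∣ N i j := by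
  obtain ⟨S, -, rfl⟩ := h
  simp only [Matrix.mul_apply]
  exact Finset.dvd_sum fun k _ => Dvd.dvd.mul_right
    (Finset.dvd_sum fun l _ => (hd l k).mul_left _) _

theorem shear (a b c t : ℤ) :
    MatEquiv !![a, b; b, c] !![a, b + t * a; b + t * a, c + 2 * t * b + t * t * a] := by
  refine ⟨!![1, 0; t, 1], by simp [Matrix.det_fin_two_of], ?_⟩
  ext i j
  fin_cases i <;> fin_cases j <;> simp [Matrix.mul_apply, Fin.sum_univ_two] <;> ring

theorem swap (a b c : ℤ) : MatEquiv !![a, b; b, c] !![c, -b; -b, a] := by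
  refine ⟨!![0, 1; -1, 0], by simp [Matrix.det_fin_two_of], ?_⟩
  ext i j
  fin_cases i <;> fin_cases j <;> simp [Matrix.mul_apply, Fin.sum_univ_two]

end MatEquiv

theorem exists_neg_le_two_mul_add_mul_le (b : ℤ) {a : ℤ} (ha : 0 < a) :
    ∃ t : ℤ, -a ≤ 2 * (b + t * a) ∧ 2 * (b + t * a) ≤ a := by
  refine ⟨-((2 * b + a) / (2 * a)), ?_⟩
  have h₁ := Int.emod_def (2 * b + a) (2 * a)
  have h₂ := Int.emod_nonneg (2 * b + a) (show 2 * a ≠ 0 by omega)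
  have h₃ := Int.emod_lt_of_pos (2 * b + a) (show 0 < 2 * a by omega)
  constructor <;> nlinarith

theorem exists_reduced_matEquiv (a b c : ℤ) (ha : 0 < a) (hD : 0 < a * c - b * b) :
    ∃ a' b' c' : ℤ, MatEquiv !![a, b; b, c] !![a', b'; b', c'] ∧
      a' * c' - b' * b' = a * c - b * b ∧ 0 < a' ∧ -a' ≤ 2 * b' ∧ 2 * b' ≤ a' ∧ a' ≤ c' := by
  obtain ⟨t, hb₁, hb₂⟩ := exists_neg_le_two_mul_add_mul_le b ha
  have hdet : a * (c + 2 * t * b + t * t * a) - (b + t * a) * (b + t * a) = a * c - b * b := by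
    ring
  by_cases hac : a ≤ c + 2 * t * b + t * t * a
  · exact ⟨_, _, _, MatEquiv.shear a b c t, hdet, ha, hb₁, hb₂, hac⟩
  · have hc : 0 < c + 2 * t * b + t * t * a := by nlinarith
    obtain ⟨a', b', c', he, hdet', hred⟩ :=
      exists_reduced_matEquiv _ (-(b + t * a)) a hc (by linarith)
    exact ⟨a', b', c', ((MatEquiv.shear a b c t).trans (MatEquiv.swap _ _ _)).trans he,
      by linarith, hred⟩
termination_by a.natAbs
decreasing_by omega

theorem eq_of_reduced_of_det_eq_eight {a b c : ℤ} (ha : 0 < a) (hb₁ : -a ≤ 2 * b) (hb₂ : 2 * b ≤ a)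
    (hac : a ≤ c) (hdet : a * c - b * b = 8) :
    (a = 1 ∧ b = 0 ∧ c = 8) ∨ (a = 2 ∧ b = 0 ∧ c = 4) ∨ (a = 3 ∧ (b = 1 ∨ b = -1) ∧ c = 3) := by
  have : a ≤ 3 := by nlinarith
  have : -2 ≤ b := by omega
  have : b ≤ 2 := by omega
  interval_cases a <;> interval_cases b <;> omega

theorem not_matEquiv_diag_one_eight : ¬ MatEquiv !![1, 0; 0, 8] !![3, 1; 1, 3] := by
  rintro ⟨S, -, hS⟩
  have h : S 0 0 * S 0 0 + S 0 1 * 8 * S 0 1 = 3 := by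
    simpa [Matrix.mul_apply, Fin.sum_univ_two] using congrFun (congrFun hS 0) 0
  have hsq : ∀ x : ZMod 8, x * x ≠ 3 := by decide
  apply hsq (S 0 0)
  have := congrArg (fun x : ℤ => (x : ZMod 8)) h
  push_cast at this
  simpa [show (8 : ZMod 8) = 0 from rfl] using this

theorem stmt17 (C : Matrix (Fin 2) (Fin 2) ℤ)
    (hsymm : C 0 1 = C 1 0)
    (hpos : ∀ v : Fin 2 → ℤ, v ≠ 0 → 0 < dotProduct v (C.mulVec v))
    (hdet : C.det = 8)
    -- the elementary divisors are 1 and 8, i.e. the gcd of the entries is 1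
    (hgcd : Int.gcd (C 0 0) (Int.gcd (C 0 1) (C 1 1)) = 1) :
    Xor' (MatEquiv C !![1, 0; 0, 8]) (MatEquiv C !![3, 1; 1, 3]) := by
  have hC : C = !![C 0 0, C 0 1; C 0 1, C 1 1] := by
    conv_lhs => rw [Matrix.eta_fin_two C, ← hsymm]
  have ha : 0 < C 0 0 := by
    simpa [dotProduct, Matrix.mulVec] using hpos ![1, 0] (by simp)
  rw [Matrix.det_fin_two, ← hsymm] at hdet
  obtain ⟨a, b, c, he, hdet', ha', hb₁, hb₂, hac⟩ :=
    exists_reduced_matEquiv _ _ _ ha (by rw [hdet]; norm_num)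
  rw [← hC] at he
  refine (xor_iff_or_and_not_and _ _).mpr
    ⟨?_, fun ⟨h₁, h₂⟩ => not_matEquiv_diag_one_eight (h₁.symm.trans h₂)⟩
  rcases eq_of_reduced_of_det_eq_eight ha' hb₁ hb₂ hac (by omega) with
    ⟨rfl, rfl, rfl⟩ | ⟨rfl, rfl, rfl⟩ | ⟨rfl, rfl | rfl, rfl⟩
  · exact Or.inl he
  · have h2 : ∀ i j, (2 : ℤ) ∣ C i j := he.symm.dvd_entries fun i j => by
      fin_cases i <;> fin_cases j <;> simp
    have := Int.dvd_coe_gcd (h2 0 0) (Int.dvd_coe_gcd (h2 0 1) (h2 1 1))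
    rw [hgcd] at this
    omega
  · exact Or.inr he
  · exact Or.inr (he.trans (by simpa using MatEquiv.swap 3 (-1) 3))
end
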